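/- arXiv:2408.11502 — 10 statements merged into one kernel-verified Lean document; each statement's English description precedes it below -/
import Mathlib

section
/- If a binary relation r on a set S is transitive and disjunctively well-founded (i.e., r is contained in a finite union T1 ∪ ... ∪ Tn of well-founded relations), then r itself is well-founded. -/
open Filter Set

/-- If a transitive relation `r` is disjunctively well-founded, i.e. contained in a
finite union of relations each admitting no infinite chain, then `r` admits no
infinite chain (is well-founded). -/
theorem transitive_disjunctively_wellFounded_is_wellFounded
    {S : Type*} (r : S → S → Prop) (htrans : Transitive r)
    (n : ℕ) (T : Fin n → S → S → Prop)
    (hsub : ∀ a b, r a b → ∃ i, T i a b)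
    (hwf : ∀ i, ¬ ∃ f : ℕ → S, ∀ k, T i (f k) (f (k + 1))) :
    ¬ ∃ f : ℕ → S, ∀ k, r (f k) (f (k + 1)) := by
  classical
  rintro ⟨f, hf⟩
  have hNe : Nonempty (Fin n) := ⟨(hsub _ _ (hf 0)).choose⟩
  have hrlt : ∀ l k, k < l → r (f k) (f l) := by
    intro l
    induction l with
    | zero => intro k hk; omega
    | succ m ih =>
      intro k hkl
      rcases Nat.lt_succ_iff_lt_or_eq.mp hkl with h | h
      · exact htrans (ih k h) (hf m)
      · rw [h]; exact hf m
  let c : ℕ → ℕ → Fin n := fun k l =>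
    if h : k < l then (hsub _ _ (hrlt l k h)).choose else Classical.arbitrary _
  have hc : ∀ k l (h : k < l), T (c k l) (f k) (f l) := by
    intro k l h
    simp only [c, dif_pos h]
    exact (hsub _ _ (hrlt l k h)).choose_spec
  set U : Ultrafilter ℕ := hyperfilter ℕ with hU
  have hgt : ∀ k : ℕ, {l | k < l} ∈ U := by
    intro k
    have he : {l | k < l} = {l | l ≤ k}ᶜ := by ext l; simp [not_le]
    rw [he, hU]
    exact compl_mem_hyperfilter_of_finite (Set.finite_le_nat k)
  -- choose dominant color for each k
  have hgex : ∀ k : ℕ, ∃ i : Fin n, {l | k < l ∧ c k l = i} ∈ U := by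
    intro k
    have : (⋃ i ∈ (Set.univ : Set (Fin n)), {l | k < l ∧ c k l = i}) ∈ U := by
      have he : (⋃ i ∈ (Set.univ : Set (Fin n)), {l | k < l ∧ c k l = i}) = {l | k < l} := by
        ext l; simp [eq_comm]
      rw [he]; exact hgt k
    rcases (Ultrafilter.finite_biUnion_mem_iff Set.finite_univ).mp this with ⟨i, _, hi⟩
    exact ⟨i, hi⟩
  let g : ℕ → Fin n := fun k => (hgex k).choose
  have hg : ∀ k, {l | k < l ∧ c k l = g k} ∈ U := fun k => (hgex k).choose_spec
  -- dominant color overall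
  have hiex : ∃ i : Fin n, {k | g k = i} ∈ U := by
    have : (⋃ i ∈ (Set.univ : Set (Fin n)), {k | g k = i}) ∈ U := by
      have he : (⋃ i ∈ (Set.univ : Set (Fin n)), {k | g k = i}) = Set.univ := by
        ext k; simp
      rw [he]; exact univ_mem
    rcases (Ultrafilter.finite_biUnion_mem_iff Set.finite_univ).mp this with ⟨i, _, hi⟩
    exact ⟨i, hi⟩
  obtain ⟨i, hA⟩ := hiex
  have hstep : ∀ k, g k = i → ∃ l, g l = i ∧ k < l ∧ c k l = i := by
    intro k hk
    have : ({k | g k = i} ∩ {l | k < l ∧ c k l = g k}) ∈ U := inter_mem hA (hg k)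
    rcases Filter.nonempty_of_mem this with ⟨l, hl1, hl2, hl3⟩
    exact ⟨l, hl1, hl2, hk ▸ hl3⟩
  have h0 : ∃ k, g k = i := by
    rcases Filter.nonempty_of_mem hA with ⟨k, hk⟩; exact ⟨k, hk⟩
  let φ : ℕ → {k : ℕ // g k = i} := fun j => Nat.rec ⟨h0.choose, h0.choose_spec⟩
    (fun _ p => ⟨(hstep p.1 p.2).choose, (hstep p.1 p.2).choose_spec.1⟩) j
  refine hwf i ⟨fun j => f (φ j).1, fun j => ?_⟩
  have hspec := (hstep (φ j).1 (φ j).2).choose_spec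
  have h2 := hc (φ j).1 _ hspec.2.1
  rw [hspec.2.2] at h2
  show T i (f (φ j).1) (f (φ (j+1)).1)
  exact h2
end

section
/- Let (S, next) be a transition system with a finite list of fairness conditions J1, ..., Jk (k ≥ 1), and let t be the transitive closure of next. Suppose p is a predicate closed under next and containing all initial states violating c, and suppose r is a relation satisfying: whenever p(s0), t(s0,s1), J1(s1), t(s1,s2), J2(s2), ..., t(s_{k-1}, s_k), Jk(s_k), then r(s0, s_k). If r is well-founded, then no fair path of the system starts in an initial state violating c; hence every fair path from an initial state starts in a state satisfying c. -/
/-- Soundness of Rule 6 (nonempty fairness set): if `p` contains all initial states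
violating `c` and is closed under `next`, `r` relates the endpoints of any
`p`-anchored chain visiting `J 1, …, J k` through the transitive closure `t` of `next`,
and `r` is well-founded (no infinite chain), then every fair path starting in an
initial state starts in a state satisfying `c`. -/
theorem rule6_soundness
    {S : Type*} (next : S → S → Prop) (init c p : S → Prop)
    (k : ℕ) (hk : 1 ≤ k) (J : Fin k → S → Prop) (r : S → S → Prop)
    (hp0 : ∀ s, init s → ¬ c s → p s)
    (hpc : ∀ s s', p s → next s s' → p s')
    (hr : ∀ g : Fin (k + 1) → S, p (g 0) →
      (∀ i : Fin k, Relation.TransGen next (g i.castSucc) (g i.succ) ∧ J i (g i.succ)) →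
      r (g 0) (g (Fin.last k)))
    (hwf : ¬ ∃ f : ℕ → S, ∀ i, r (f i) (f (i + 1))) :
    ∀ π : ℕ → S, (∀ i, next (π i) (π (i + 1))) →
      (∀ i : Fin k, ∀ N, ∃ m, N ≤ m ∧ J i (π m)) →
      init (π 0) → c (π 0) := by
  intro π hstep hfair hinit
  by_contra hc
  have hp : ∀ n, p (π n) := by
    intro n
    induction n with
    | zero => exact hp0 _ hinit hc
    | succ n ih => exact hpc _ _ ih (hstep n)
  have htg : ∀ a b : ℕ, a < b → Relation.TransGen next (π a) (π b) := by
    intro a b hab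
    induction b, hab using Nat.le_induction with
    | base => exact Relation.TransGen.single (hstep a)
    | succ n hn ih => exact ih.tail (hstep n)
  have key : ∀ N, ∃ M, r (π N) (π M) := by
    intro N
    choose F hF1 hF2 using fun (i : Fin k) (n : ℕ) => hfair i (n + 1)
    set m : ℕ → ℕ := fun j =>
      Nat.rec N (fun j mj => if h : j < k then F ⟨j, h⟩ mj else mj + 1) j with hm
    have hmono : ∀ j, m j < m (j + 1) := by
      intro j
      show m j < (if h : j < k then F ⟨j, h⟩ (m j) else m j + 1)
      by_cases hjk : j < k
      · simp only [hjk, dif_pos]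
        have := hF1 ⟨j, hjk⟩ (m j); omega
      · simp only [hjk, dif_neg, not_false_iff]; omega
    refine ⟨m k, ?_⟩
    have := hr (fun i : Fin (k + 1) => π (m i.val)) (hp N) ?_
    · exact this
    · intro i
      constructor
      · exact htg _ _ (hmono i.val)
      · have hik : (i : ℕ) < k := i.isLt
        have : m (i.val + 1) = F ⟨i.val, hik⟩ (m i.val) := by
          show (if h : i.val < k then F ⟨i.val, h⟩ (m i.val) else m i.val + 1) = _
          simp [hik]
        simp only [Fin.val_succ, this]
        simpa using hF2 ⟨i.val, hik⟩ (m i.val)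
  choose G hG using key
  apply hwf
  refine ⟨fun n => π (Nat.rec 0 (fun _ pp => G pp) n), fun i => ?_⟩
  exact hG _
end

section
/- Let (S, next) be a transition system with no fairness conditions. Suppose p is closed under next and holds at all initial states violating c, and suppose r(s,s') holds whenever p(s) and t(s,s') (t the transitive closure of next). If r is transitive and well-founded, then there is no infinite path starting in an initial state that violates c. -/
/-- Soundness of Rule 6 with no fairness conditions: if `p` contains all initial
states violating `c` and is closed under `next`, `r` contains every pair `(s, s')`
with `p s` and `s'` reachable from `s` by the transitive closure of `next`, and `r`
is transitive and well-founded (no infinite chain), then no infinite path starts in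
an initial state violating `c`. -/
theorem rule6_soundness_no_fairness
    {S : Type*} (next : S → S → Prop) (init c p : S → Prop) (r : S → S → Prop)
    (hp0 : ∀ s, init s → ¬ c s → p s)
    (hpc : ∀ s s', p s → next s s' → p s')
    (hr : ∀ s s', p s → Relation.TransGen next s s' → r s s')
    (htrans : Transitive r)
    (hwf : ¬ ∃ f : ℕ → S, ∀ i, r (f i) (f (i + 1))) :
    ¬ ∃ π : ℕ → S, (∀ i, next (π i) (π (i + 1))) ∧ init (π 0) ∧ ¬ c (π 0) := by
  rintro ⟨π, hnext, hinit, hc⟩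
  have hp : ∀ i, p (π i) := by
    intro i; induction i with
    | zero => exact hp0 _ hinit hc
    | succ n ih => exact hpc _ _ ih (hnext n)
  exact hwf ⟨π, fun i => hr _ _ (hp i) (Relation.TransGen.single (hnext i))⟩
end

section
/- Let (S, next) be a transition system, J a state predicate, q a state predicate, and r a well-founded relation such that for every state s with q(s) there exists s' with next(s,s') and either (J(s) and Q(s')) or (r(s,s') and q(s')), where Q is another state predicate. Then from every state s satisfying q(s) there is a finite (possibly empty) path of next-steps leading to a state u with J(u), followed by one more next-step to a state u' with Q(u'). -/
/-- Core argument of Rule 7: if `r` is well-founded (no infinite chain) and from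
every `q`-state there is a `next`-successor witnessing either (`J` here and `Q` there)
or (`r`-progress and `q` there), then from every `q`-state there is a finite
(possibly empty) `next`-path to a state satisfying `J`, followed by one more
`next`-step to a state satisfying `Q`. -/
theorem rule7_core
    {S : Type*} (next : S → S → Prop) (J q Q : S → Prop) (r : S → S → Prop)
    (hwf : ¬ ∃ f : ℕ → S, ∀ i, r (f i) (f (i + 1)))
    (hstep : ∀ s, q s → ∃ s', next s s' ∧ ((J s ∧ Q s') ∨ (r s s' ∧ q s'))) :
    ∀ s, q s → ∃ (n : ℕ) (g : ℕ → S), g 0 = s ∧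
      (∀ i < n, next (g i) (g (i + 1))) ∧ J (g n) ∧
      ∃ u', next (g n) u' ∧ Q u' := by
  have wf : WellFounded (fun a b => r b a) := by
    constructor
    intro a
    by_contra hacc
    have key : ∀ x : {x : S // ¬ Acc (fun a b => r b a) x},
        ∃ y : {x : S // ¬ Acc (fun a b => r b a) x}, r x.1 y.1 := by
      rintro ⟨x, hx⟩
      by_contra hco
      push_neg at hco
      exact hx (Acc.intro x fun y hy => by_contra fun hny => hco ⟨y, hny⟩ hy)
    choose succ hsucc using key
    set f : ℕ → {x : S // ¬ Acc (fun a b => r b a) x} :=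
      fun n => succ^[n] ⟨a, hacc⟩ with hf
    refine hwf ⟨fun n => (f n).1, fun i => ?_⟩
    have h1 : f (i + 1) = succ (f i) := Function.iterate_succ_apply' succ i _
    show r (f i).1 (f (i + 1)).1
    rw [h1]
    exact hsucc (f i)
  intro s hq
  induction s using wf.induction with
  | _ s ih =>
    obtain ⟨s', hn, h⟩ := hstep s hq
    rcases h with ⟨hJ, hQ⟩ | ⟨hr, hq'⟩
    · exact ⟨0, fun _ => s, rfl, fun i hi => absurd hi (Nat.not_lt_zero i), hJ, s', hn, hQ⟩
    · obtain ⟨n, g, hg0, hgs, hgJ, u', hu⟩ := ih s' hr hq'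
      refine ⟨n + 1, fun i => match i with | 0 => s | i + 1 => g i, rfl, ?_, hgJ, u', hu⟩
      intro i hi
      match i with
      | 0 => simpa [hg0] using hn
      | i + 1 => exact hgs i (Nat.lt_of_succ_lt_succ hi)
end

section
/- Let (S, next) be a transition system with fairness conditions J1, ..., Jk (k ≥ 1), and suppose there exist predicates q1, ..., qk and well-founded transitive relations r1, ..., rk such that for each i and each state s with q_i(s) there exists s' with next(s,s') and either (J_i(s) and q_{(i mod k)+1}(s')) or (r_i(s,s') and q_i(s')). Then from every state satisfying q1 there starts a fair path, i.e., an infinite next-path along which each J_i holds infinitely often. -/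
section Rule7Aux

variable {S : Type*} {k : ℕ} {J : Fin k → S → Prop} {q : Fin k → S → Prop}
  {r : Fin k → S → S → Prop}

open Classical in
/-- Auxiliary chain of (phase index, state, invariant) triples for Rule 7. -/
noncomputable def rule7Chain (hk : 0 < k)
    (nxt : ∀ (i : Fin k) (s : S), q i s → S)
    (hb : ∀ i s h, (J i s ∧ q ⟨(i.val + 1) % k, Nat.mod_lt _ hk⟩ (nxt i s h)) ∨
        (r i s (nxt i s h) ∧ q i (nxt i s h)))
    (s0 : S) (h0 : q ⟨0, hk⟩ s0) : ℕ → Σ' (i : Fin k) (s : S), q i s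
  | 0 => ⟨⟨0, hk⟩, s0, h0⟩
  | m + 1 =>
    let p := rule7Chain hk nxt hb s0 h0 m
    if hJ : J p.1 p.2.1 ∧ q ⟨(p.1.val + 1) % k, Nat.mod_lt _ hk⟩ (nxt p.1 p.2.1 p.2.2) then
      ⟨⟨(p.1.val + 1) % k, Nat.mod_lt _ hk⟩, nxt p.1 p.2.1 p.2.2, hJ.2⟩
    else
      ⟨p.1, nxt p.1 p.2.1 p.2.2, ((hb p.1 p.2.1 p.2.2).resolve_left hJ).2⟩

end Rule7Aux

/-- Soundness of Rule 7 (nonempty fairness set): given predicates `q i` and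
well-founded transitive relations `r i` such that every `q i`-state has a
`next`-successor witnessing either (`J i` here and `q (i+1 mod k)` there) or
(`r i`-progress and `q i` there), every state satisfying `q 1` starts a fair path. -/
theorem rule7_soundness
    {S : Type*} (next : S → S → Prop)
    (k : ℕ) (hk : 0 < k) (J : Fin k → S → Prop)
    (q : Fin k → S → Prop) (r : Fin k → S → S → Prop)
    (htrans : ∀ i, Transitive (r i))
    (hwf : ∀ i, ¬ ∃ f : ℕ → S, ∀ m, r i (f m) (f (m + 1)))
    (hstep : ∀ (i : Fin k) (s : S), q i s → ∃ s', next s s' ∧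
      ((J i s ∧ q ⟨(i.val + 1) % k, Nat.mod_lt _ hk⟩ s') ∨ (r i s s' ∧ q i s'))) :
    ∀ s, q ⟨0, hk⟩ s → ∃ π : ℕ → S, π 0 = s ∧
      (∀ n, next (π n) (π (n + 1))) ∧
      (∀ i : Fin k, ∀ N, ∃ m, N ≤ m ∧ J i (π m)) := by
  intro s hs
  classical
  choose nxt hx using hstep
  have hb : ∀ i s h, (J i s ∧ q ⟨(i.val + 1) % k, Nat.mod_lt _ hk⟩ (nxt i s h)) ∨
      (r i s (nxt i s h) ∧ q i (nxt i s h)) := fun i s h => (hx i s h).2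
  set F : ℕ → Σ' (i : Fin k) (s : S), q i s := rule7Chain hk nxt hb s hs with hFdef
  set π : ℕ → S := fun m => (F m).2.1 with hπdef
  set idx : ℕ → Fin k := fun m => (F m).1 with hidxdef
  set sI : Fin k → Fin k := fun i => ⟨(i.val + 1) % k, Nat.mod_lt _ hk⟩ with hsIdef
  -- unfolding facts
  have hA : ∀ m, π (m + 1) = nxt (idx m) (π m) (F m).2.2 := by
    intro m
    show (rule7Chain hk nxt hb s hs (m + 1)).2.1 = _
    rw [rule7Chain]
    by_cases h : (J (F m).1 (F m).2.1 ∧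
        q ⟨((F m).1.val + 1) % k, Nat.mod_lt _ hk⟩ (nxt (F m).1 (F m).2.1 (F m).2.2))
    · rw [dif_pos h]
    · rw [dif_neg h]
  set Adv : ℕ → Prop := fun m => J (idx m) (π m) ∧ q (sI (idx m)) (π (m + 1)) with hAdvdef
  have hB : ∀ m, (Adv m → idx (m + 1) = sI (idx m)) ∧ (¬ Adv m → idx (m + 1) = idx m) := by
    intro m
    have hcond : Adv m ↔ (J (F m).1 (F m).2.1 ∧
        q ⟨((F m).1.val + 1) % k, Nat.mod_lt _ hk⟩ (nxt (F m).1 (F m).2.1 (F m).2.2)) := by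
      rw [hAdvdef]
      constructor
      · intro h; exact ⟨h.1, by rw [← hA m]; exact h.2⟩
      · intro h; exact ⟨h.1, by rw [hA m]; exact h.2⟩
    constructor
    · intro h
      show (rule7Chain hk nxt hb s hs (m + 1)).1 = _
      rw [rule7Chain]
      rw [dif_pos (hcond.1 h)]
    · intro h
      show (rule7Chain hk nxt hb s hs (m + 1)).1 = _
      rw [rule7Chain]
      rw [dif_neg (fun hc => h (hcond.2 hc))]
  have hr : ∀ m, ¬ Adv m → r (idx m) (π m) (π (m + 1)) := by
    intro m hm
    have hd := hb (idx m) (π m) (F m).2.2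
    rw [← hA m] at hd
    refine (hd.resolve_left ?_).1
    intro hc
    exact hm hc
  -- infinitely many advances
  have hAdvEx : ∀ m, ∃ j, Adv (m + j) := by
    intro m
    by_contra h
    push_neg at h
    have hconst : ∀ j, idx (m + j) = idx m := by
      intro j
      induction j with
      | zero => rfl
      | succ j ih =>
        have := (hB (m + j)).2 (h j)
        rw [show m + (j + 1) = (m + j) + 1 from rfl, this, ih]
    refine hwf (idx m) ⟨fun j => π (m + j), fun j => ?_⟩
    have := hr (m + j) (h j)
    rwa [hconst j] at this
  -- least advance keeps the index
  have hstep3 : ∀ m, ∃ m', m ≤ m' ∧ Adv m' ∧ idx m' = idx m := by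
    intro m
    have hex : ∃ j, Adv (m + j) := hAdvEx m
    refine ⟨m + Nat.find hex, by omega, Nat.find_spec hex, ?_⟩
    have : ∀ t, t ≤ Nat.find hex → idx (m + t) = idx m := by
      intro t
      induction t with
      | zero => intro _; rfl
      | succ t ih =>
        intro ht
        have hlt : t < Nat.find hex := by omega
        have hnadv : ¬ Adv (m + t) := Nat.find_min hex hlt
        have := (hB (m + t)).2 hnadv
        rw [show m + (t + 1) = (m + t) + 1 from rfl, this, ih (by omega)]
    exact this _ le_rfl
  -- the index cycles through all residues at advance points
  have hC : ∀ t m, ∃ m', m ≤ m' ∧ Adv m' ∧ (idx m').val = ((idx m).val + t) % k := by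
    intro t
    induction t with
    | zero =>
      intro m
      obtain ⟨m', h1, h2, h3⟩ := hstep3 m
      exact ⟨m', h1, h2, by rw [h3, Nat.add_zero, Nat.mod_eq_of_lt (idx m).isLt]⟩
    | succ t ih =>
      intro m
      obtain ⟨m', h1, h2, h3⟩ := ih m
      obtain ⟨m'', g1, g2, g3⟩ := hstep3 (m' + 1)
      have hidx : idx (m' + 1) = sI (idx m') := (hB m').1 h2
      refine ⟨m'', by omega, g2, ?_⟩
      rw [g3, hidx]
      show ((idx m').val + 1) % k = _
      rw [h3, Nat.mod_add_mod, show (idx m).val + t + 1 = (idx m).val + (t + 1) from by ring]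
  refine ⟨π, rfl, ?_, ?_⟩
  · intro n
    rw [hA n]
    exact (hx (idx n) (π n) (F n).2.2).1
  · intro i N
    obtain ⟨m, h1, h2, h3⟩ := hC (i.val + k - (idx N).val) N
    have hval : (idx m).val = i.val := by
      rw [h3]
      have hlt := (idx N).isLt
      rw [show (idx N).val + (i.val + k - (idx N).val) = i.val + k from by omega,
        Nat.add_mod_right, Nat.mod_eq_of_lt i.isLt]
    have : idx m = i := Fin.ext hval
    exact ⟨m, h1, by rw [← this]; exact h2.1⟩
end

section
/- Let D be a transition system with state predicates, and let π = s0, s1, ... be a path. Define an extended path π_X over states augmented with a Boolean component x_X by setting x_X at position i to the truth value of c at s_{i+1}. Then π_X is a path of the extended system whose transition relation is next(s,s') ∧ (x_X = c(s')), and for every LTL path formula φ with a free propositional symbol, φ(Xc) holds on π iff φ(x_X) holds on π_X, where x_X is read as an atomic proposition. -/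
/-- LTL path formulas over atomic propositions of type `α`. -/
inductive LTL (α : Type) where
  | atom : α → LTL α
  | tru : LTL α
  | neg : LTL α → LTL α
  | conj : LTL α → LTL α → LTL α
  | disj : LTL α → LTL α → LTL α
  | nxt : LTL α → LTL α
  | untl : LTL α → LTL α → LTL α

/-- Satisfaction of an LTL formula at position `i`, relative to a valuation `V`
assigning to each atom the set of positions where it holds. -/
def LTL.Sat {α : Type} (V : α → ℕ → Prop) : ℕ → LTL α → Prop
  | i, .atom a => V a i
  | _, .tru => True
  | i, .neg φ => ¬ LTL.Sat V i φ
  | i, .conj φ ψ => LTL.Sat V i φ ∧ LTL.Sat V i ψ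
  | i, .disj φ ψ => LTL.Sat V i φ ∨ LTL.Sat V i ψ
  | i, .nxt φ => LTL.Sat V (i + 1) φ
  | i, .untl φ ψ => ∃ j, i ≤ j ∧ LTL.Sat V j ψ ∧ ∀ m, i ≤ m → m < j → LTL.Sat V m φ

/-- Rule 3: the extended path `πX` over `S × Bool`, whose Boolean component at
position `i` records the truth of `c` at `π (i+1)`, is a path of the extended
system with transition `next s s' ∧ (x = c s')`, and for every LTL formula `φ`
with a free propositional symbol (the `none` atom), `φ(Xc)` holds on `π` iff
`φ(x_X)` holds on `πX`, where `x_X` is read as the atomic proposition given by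
the Boolean component. -/
theorem rule3_extended_path
    {S : Type} (next : S → S → Prop) (c : S → Prop)
    (π : ℕ → S) (hπ : ∀ i, next (π i) (π (i + 1)))
    (πX : ℕ → S × Bool)
    (hfst : ∀ i, (πX i).1 = π i)
    (hsnd : ∀ i, ((πX i).2 = true ↔ c (π (i + 1)))) :
    (∀ i, next (πX i).1 (πX (i + 1)).1 ∧ ((πX i).2 = true ↔ c ((πX (i + 1)).1))) ∧
    (∀ (α : Type) (φ : LTL (Option α)) (V : α → ℕ → Prop) (i : ℕ),
      LTL.Sat (fun o => o.elim (fun j => c (π (j + 1))) V) i φ ↔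
      LTL.Sat (fun o => o.elim (fun j => (πX j).2 = true) V) i φ) := by
  refine ⟨fun i => ⟨by rw [hfst, hfst]; exact hπ i, by rw [hfst]; exact hsnd i⟩, ?_⟩
  intro α φ V
  induction φ with
  | atom a =>
    intro i
    cases a with
    | none => exact (hsnd i).symm
    | some a => exact Iff.rfl
  | tru => exact fun i => Iff.rfl
  | neg φ ih => exact fun i => not_congr (ih i)
  | conj φ ψ ih1 ih2 => exact fun i => and_congr (ih1 i) (ih2 i)
  | disj φ ψ ih1 ih2 => exact fun i => or_congr (ih1 i) (ih2 i)
  | nxt φ ih => exact fun i => ih (i+1)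
  | untl φ ψ ih1 ih2 =>
    exact fun i => exists_congr fun j => and_congr_right fun _ =>
      and_congr (ih2 j) (forall_congr' fun m => imp_congr_right fun _ =>
        imp_congr_right fun _ => ih1 m)
end

section
/- Let π = s0, s1, ... be a path of a transition system and c a state predicate. Define the Boolean sequence x_G by x_G(i) = true iff c(s_j) holds for all j ≥ i. Then: (1) x_G(i) = (c(s_i) ∧ x_G(i+1)) for all i; and (2) the fairness condition 'x_G ∨ ¬c' holds infinitely often along the augmented path, i.e., for infinitely many i either x_G(i) is true or c(s_i) is false. -/
/-- Rule 4: along a path `π`, the sequence `x_G` tracking `Gc` satisfies the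
expansion law `x_G(i) = c(s_i) ∧ x_G(i+1)`, and the fairness condition
`x_G ∨ ¬c` holds infinitely often. -/
theorem rule4_xG_expansion_and_fairness
    {S : Type*} (next : S → S → Prop) (c : S → Prop)
    (π : ℕ → S) (hπ : ∀ i, next (π i) (π (i + 1)))
    (xG : ℕ → Prop) (hxG : ∀ i, xG i ↔ ∀ j, i ≤ j → c (π j)) :
    (∀ i, xG i ↔ (c (π i) ∧ xG (i + 1))) ∧
    (∀ N, ∃ i, N ≤ i ∧ (xG i ∨ ¬ c (π i))) := by
  constructor
  · intro i
    rw [hxG, hxG]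
    constructor
    · intro h
      exact ⟨h i le_rfl, fun j hj => h j (le_of_lt (Nat.lt_of_lt_of_le (Nat.lt_succ_self i) hj))⟩
    · rintro ⟨hc, h⟩ j hj
      rcases Nat.eq_or_lt_of_le hj with rfl | hlt
      · exact hc
      · exact h j hlt
  · intro N
    by_cases h : ∀ j, N ≤ j → c (π j)
    · exact ⟨N, le_rfl, Or.inl ((hxG N).mpr h)⟩
    · push_neg at h
      obtain ⟨j, hj, hc⟩ := h
      exact ⟨j, hj, Or.inr hc⟩
end

section
/- Let (S, next) be a transition system and define, for a fixed predicate J and a notion of 'fair state' F ⊆ S, the relation r(s, s') to hold iff s' ∈ F and either J(s), or s' is the successor of s on a fixed shortest next-path from s to some fair state satisfying J. Assuming every fair state has a finite shortest path to a fair state satisfying J, the relation r restricted to pairs where ¬J(s) is well-founded. -/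
/-- Relative completeness of Rule 7: let `dist s` denote the length of the fixed
shortest `next`-path from `s` to a fair state satisfying `J` (assumed to exist for
every fair state), and let `r s s'` hold iff `s'` is fair and either `J s`, or `s'`
is the successor of `s` on that shortest path (so `dist s = dist s' + 1`). Then `r`
restricted to pairs with `¬ J s` is well-founded: it admits no infinite chain. -/
theorem rule7_completeness_wellFounded
    {S : Type*} (next : S → S → Prop) (F J : S → Prop)
    (dist : S → ℕ) (r : S → S → Prop)
    (hr : ∀ s s', r s s' ↔ (F s' ∧ (J s ∨ (next s s' ∧ dist s = dist s' + 1)))) :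
    ¬ ∃ f : ℕ → S, (∀ i, ¬ J (f i)) ∧ (∀ i, r (f i) (f (i + 1))) := by
  rintro ⟨f, hJ, hstep⟩
  have hdec : ∀ i, dist (f (i+1)) < dist (f i) := by
    intro i
    have h := (hr (f i) (f (i+1))).mp (hstep i)
    rcases h.2 with h1 | ⟨_, h2⟩
    · exact absurd h1 (hJ i)
    · omega
  have : ∀ i, dist (f i) + i ≤ dist (f 0) := by
    intro i
    induction i with
    | zero => simp
    | succ n ih => have := hdec n; omega
  have := this (dist (f 0) + 1)
  omega
end

section
/- Starting from the all-zero state with y3 = 2, i.e., (x1,y1,x2,y2,x3,y3) = (0,0,0,0,0,2), in the robot system R the three robots are never all at the same position in any reachable state, while for each pair of robots (1,2), (1,3), (2,3) there exists an infinite sequence of moves along which that pair occupies the same position infinitely often. -/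
structure RState where
  x1 : ℚ
  y1 : ℚ
  x2 : ℚ
  y2 : ℚ
  x3 : ℚ
  y3 : ℚ

def RMove (s s' : RState) : Prop :=
  ∃ a b : ℚ,
    s' = { s with x1 := s.x1 + 2 * a + b } ∨
    s' = { s with x2 := s.x2 + a + b, y2 := s.y2 - 2 * a - 2 * b } ∨
    s' = { s with x3 := s.x3 + a + b, y3 := s.y3 - a - b }

def AllMeet (s : RState) : Prop :=
  s.x1 = s.x2 ∧ s.x2 = s.x3 ∧ s.y1 = s.y2 ∧ s.y2 = s.y3

def Meet12 (s : RState) : Prop := s.x1 = s.x2 ∧ s.y1 = s.y2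
def Meet13 (s : RState) : Prop := s.x1 = s.x3 ∧ s.y1 = s.y3
def Meet23 (s : RState) : Prop := s.x2 = s.x3 ∧ s.y2 = s.y3

/-- The initial state of the verified robot system. -/
def rInit : RState := ⟨0, 0, 0, 0, 0, 2⟩

def RInv (s : RState) : Prop :=
  s.y1 = 0 ∧ 2 * s.x2 + s.y2 = 0 ∧ s.x3 + s.y3 = 2

lemma rinv_step {s s' : RState} (h : RMove s s') (hs : RInv s) : RInv s' := by
  obtain ⟨a, b, h | h | h⟩ := h <;> subst h <;>
    obtain ⟨h1, h2, h3⟩ := hs <;> refine ⟨?_, ?_, ?_⟩ <;> simp <;> linarith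

lemma rinv_reach {s' : RState} (h : Relation.ReflTransGen RMove rInit s') : RInv s' := by
  induction h with
  | refl => exact ⟨rfl, by norm_num [rInit], by norm_num [rInit]⟩
  | tail _ hstep ih => exact rinv_step hstep ih

lemma rmove_refl (s : RState) : RMove s s := by
  refine ⟨0, 0, Or.inl ?_⟩
  cases s; simp

/-- From the initial state `(0,0,0,0,0,2)` the three robots are never all at the
same position in any reachable state, while for each pair of robots there is an
infinite sequence of moves along which that pair meets infinitely often. -/
theorem robot_verification :
    (∀ s', Relation.ReflTransGen RMove rInit s' → ¬ AllMeet s') ∧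
    (∃ π : ℕ → RState, π 0 = rInit ∧ (∀ i, RMove (π i) (π (i + 1))) ∧
      ∀ N, ∃ m, N ≤ m ∧ Meet12 (π m)) ∧
    (∃ π : ℕ → RState, π 0 = rInit ∧ (∀ i, RMove (π i) (π (i + 1))) ∧
      ∀ N, ∃ m, N ≤ m ∧ Meet13 (π m)) ∧
    (∃ π : ℕ → RState, π 0 = rInit ∧ (∀ i, RMove (π i) (π (i + 1))) ∧
      ∀ N, ∃ m, N ≤ m ∧ Meet23 (π m)) := by
  refine ⟨?_, ?_, ?_, ?_⟩
  · intro s' h hm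
    obtain ⟨h1, h2, h3⟩ := rinv_reach h
    obtain ⟨e1, e2, e3, e4⟩ := hm
    have : s'.y2 = 0 := by rw [← e3, h1]
    linarith [e2, e4]
  · exact ⟨fun _ => rInit, rfl, fun i => rmove_refl _,
      fun N => ⟨N, le_refl N, rfl, rfl⟩⟩
  · -- meet 1 and 3 at (2,0)
    refine ⟨fun n => if n = 0 then rInit else if n = 1 then ⟨2,0,0,0,0,2⟩
      else ⟨2,0,0,0,2,0⟩, rfl, ?_, ?_⟩
    · intro i
      match i with
      | 0 => exact ⟨1, 0, Or.inl (by norm_num [rInit])⟩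
      | 1 => exact ⟨2, 0, Or.inr (Or.inr (by norm_num))⟩
      | (n+2) => simp only [Nat.add_eq, show n+2 ≠ 0 by omega, show n+2 ≠ 1 by omega,
          show n+3 ≠ 0 by omega, show n+3 ≠ 1 by omega, if_false]
                 exact rmove_refl _
    · intro N
      exact ⟨N + 2, by omega, by simp only [show N+2 ≠ 0 by omega,
        show N+2 ≠ 1 by omega, if_false]; exact ⟨rfl, rfl⟩⟩
  · -- meet 2 and 3 at (-2,4)
    refine ⟨fun n => if n = 0 then rInit else if n = 1 then ⟨0,0,-2,4,0,2⟩
      else ⟨0,0,-2,4,-2,4⟩, rfl, ?_, ?_⟩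
    · intro i
      match i with
      | 0 => exact ⟨-2, 0, Or.inr (Or.inl (by norm_num [rInit]))⟩
      | 1 => exact ⟨-2, 0, Or.inr (Or.inr (by norm_num))⟩
      | (n+2) => simp only [Nat.add_eq, show n+2 ≠ 0 by omega, show n+2 ≠ 1 by omega,
          show n+3 ≠ 0 by omega, show n+3 ≠ 1 by omega, if_false]
                 exact rmove_refl _
    · intro N
      exact ⟨N + 2, by omega, by simp only [show N+2 ≠ 0 by omega,
        show N+2 ≠ 1 by omega, if_false]; exact ⟨rfl, rfl⟩⟩
end

section
/- In the synthesized bank program B_S, along every execution the invariant pro ≥ 0.06 · exp holds at every state at the loop head, and consequently every execution path satisfies: either exp < 1000 at all states, or from some point on pro > 50 forever. -/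
/-- A state of the bank program at the loop head. -/
structure BState where
  req : ℚ
  bal : ℚ
  exp : ℚ
  pro : ℚ

/-- One full iteration of the synthesized bank program `B_S`: a request `r` is
chosen nondeterministically; if the guard `bal - r ≥ 0.1` fails nothing else
happens; otherwise the balance is updated, then the deposit or withdrawal branch
is taken, and finally the bank pays the `0.1` fee. -/
def BStep (s s' : BState) : Prop :=
  ∃ r : ℚ,
    (¬ (0.1 ≤ s.bal - r) ∧ s' = ⟨r, s.bal, s.exp, s.pro⟩) ∨
    (0.1 ≤ s.bal - r ∧ r < 0 ∧
      s' = ⟨r, (s.bal - r) - 0.1, s.exp, (s.pro + 0.1) - 0.1⟩) ∨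
    (0.1 ≤ s.bal - r ∧ ¬ r < 0 ∧
      s' = ⟨r, (s.bal - r) - 0.1 - 0.06 * r, s.exp + r, (s.pro + 0.1 + 0.06 * r) - 0.1⟩)

/-- Along every execution of `B_S` from the initial state (`bal = exp = pro = 0`),
the invariant `pro ≥ 0.06·exp` holds at every loop head, and consequently either
`exp < 1000` at all states or from some point on `pro > 50` forever. -/
theorem bank_invariant_and_liveness
    (π : ℕ → BState)
    (hinit : (π 0).bal = 0 ∧ (π 0).exp = 0 ∧ (π 0).pro = 0)
    (hstep : ∀ i, BStep (π i) (π (i + 1))) :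
    (∀ i, 0.06 * (π i).exp ≤ (π i).pro) ∧
    ((∀ i, (π i).exp < 1000) ∨ ∃ N, ∀ i, N ≤ i → 50 < (π i).pro) := by
  have key : ∀ i, 0.06 * (π i).exp ≤ (π i).pro ∧
      (π i).exp ≤ (π (i+1)).exp ∧ (π i).pro ≤ (π (i+1)).pro := by
    intro i
    induction i with
    | zero =>
      refine ⟨by simp [hinit.2.1, hinit.2.2], ?_⟩
      obtain ⟨r, h | h | h⟩ := hstep 0 <;> obtain ⟨h1, h2⟩ := h
      · rw [h2]; simp
      · rw [h2.2]; simp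
      · rw [h2.2]; push_neg at h2; constructor <;> simp <;> nlinarith [h2.1]
    | succ n ih =>
      have hinv : 0.06 * (π (n+1)).exp ≤ (π (n+1)).pro := by
        obtain ⟨r, h | h | h⟩ := hstep n <;> obtain ⟨h1, h2⟩ := h
        · rw [h2]; exact ih.1
        · rw [h2.2]; simpa using ih.1
        · rw [h2.2]; push_neg at h2; simp; nlinarith [ih.1]
      refine ⟨hinv, ?_⟩
      obtain ⟨r, h | h | h⟩ := hstep (n+1) <;> obtain ⟨h1, h2⟩ := h
      · rw [h2]; simp
      · rw [h2.2]; simp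
      · rw [h2.2]; push_neg at h2; constructor <;> simp <;> nlinarith [h2.1]
  refine ⟨fun i => (key i).1, ?_⟩
  by_cases hall : ∀ i, (π i).exp < 1000
  · exact Or.inl hall
  · push_neg at hall
    obtain ⟨N, hN⟩ := hall
    refine Or.inr ⟨N, fun i hi => ?_⟩
    have hexp : (π N).exp ≤ (π i).exp := by
      clear hN
      induction i with
      | zero => simp_all
      | succ n ih =>
        rcases Nat.lt_or_ge N (n+1) with h | h
        · exact le_trans (ih (Nat.lt_succ_iff.mp h)) (key n).2.1
        · have : N = n+1 := le_antisymm hi h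
          simp [this]
    have := (key i).1
    nlinarith
end
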